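/- Completeness of the tree rewriting calculus: for any spi-logic L = K⁺ ∪ A with A ⊆ {(4),(m),(J)}, if φ ⊢_L ψ for strictly positive formulas φ, ψ, then T(φ) ↪*_{TL} T(ψ) in the tree rewriting calculus TL = TK⁺ ∪ {μ | (μ) ∈ A}. -/

import Mathlib

inductive MTree : Type where
  | node : List ℕ → List (ℕ × MTree) → MTree

namespace MTree

mutual
def numNodes : MTree → ℕ
  | .node _ Γ => 1 + numNodesL Γ
def numNodesL : List (ℕ × MTree) → ℕ
  | [] => 0
  | (_, t) :: Γ => numNodes t + numNodesL Γ
end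

mutual
def height : MTree → ℕ
  | .node _ [] => 0
  | .node _ (p :: Γ) => heightL (p :: Γ) + 1
def heightL : List (ℕ × MTree) → ℕ
  | [] => 0
  | (_, t) :: Γ => max (height t) (heightL Γ)
end

mutual
def width : MTree → ℕ
  | .node _ [] => 1
  | .node _ (p :: Γ) => max (p :: Γ).length (widthL (p :: Γ))
def widthL : List (ℕ × MTree) → ℕ
  | [] => 0
  | (_, t) :: Γ => max (width t) (widthL Γ)
end

def sum : MTree → MTree → MTree
  | .node Δ Γ, .node Δ' Γ' => .node (Δ ++ Δ') (Γ ++ Γ')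

inductive IsPos : List ℕ → MTree → Prop where
  | nil : ∀ t, IsPos [] t
  | cons : ∀ {Δ : List ℕ} {Γ : List (ℕ × MTree)} {i : ℕ} {k : List ℕ}
      (h : i < Γ.length), IsPos k (Γ.get ⟨i, h⟩).2 → IsPos (i :: k) (.node Δ Γ)

def subtree : List ℕ → MTree → MTree
  | [], t => t
  | i :: k, .node Δ Γ =>
    match Γ[i]? with
    | some p => subtree k p.2
    | none => .node Δ Γ

def replace : List ℕ → MTree → MTree → MTree
  | [], _, s => s
  | i :: k, .node Δ Γ, s =>
      .node Δ (Γ.modify i (fun p => (p.1, replace k p.2 s)))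

inductive RhoPlus : MTree → MTree → Prop where
  | mk : ∀ (Δ : List ℕ) (Γ : List (ℕ × MTree)) (i : ℕ) (h : i < Δ.length),
      RhoPlus (.node Δ Γ) (.node (Δ.get ⟨i, h⟩ :: Δ) Γ)

inductive RhoMinus : MTree → MTree → Prop where
  | mk : ∀ (Δ : List ℕ) (Γ : List (ℕ × MTree)) (i : ℕ), i < Δ.length →
      RhoMinus (.node Δ Γ) (.node (Δ.eraseIdx i) Γ)

inductive Sigma' : MTree → MTree → Prop where
  | mk : ∀ (Δ : List ℕ) (Γ : List (ℕ × MTree)) (i j : ℕ)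
      (hi : i < Γ.length) (hj : j < Γ.length), i ≠ j →
      Sigma' (.node Δ Γ) (.node Δ ((Γ.set i (Γ.get ⟨j, hj⟩)).set j (Γ.get ⟨i, hi⟩)))

inductive PiPlus : MTree → MTree → Prop where
  | mk : ∀ (Δ : List ℕ) (Γ : List (ℕ × MTree)) (i : ℕ) (h : i < Γ.length),
      PiPlus (.node Δ Γ) (.node Δ (Γ.get ⟨i, h⟩ :: Γ))

inductive PiMinus : MTree → MTree → Prop where
  | mk : ∀ (Δ : List ℕ) (Γ : List (ℕ × MTree)) (i : ℕ), i < Γ.length →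
      PiMinus (.node Δ Γ) (.node Δ (Γ.eraseIdx i))

inductive FourR : MTree → MTree → Prop where
  | mk : ∀ (Δ : List ℕ) (Γ : List (ℕ × MTree)) (i : ℕ) (h : i < Γ.length)
      (β : ℕ) (s : MTree),
      Γ.get ⟨i, h⟩ = (β, .node [] [(β, s)]) →
      FourR (.node Δ Γ) (.node Δ (Γ.set i (β, s)))

inductive MonoR : MTree → MTree → Prop where
  | mk : ∀ (Δ : List ℕ) (Γ : List (ℕ × MTree)) (i : ℕ) (h : i < Γ.length)
      (α β : ℕ) (s : MTree),
      Γ.get ⟨i, h⟩ = (α, s) → β < α →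
      MonoR (.node Δ Γ) (.node Δ (Γ.set i (β, s)))

inductive JayR : MTree → MTree → Prop where
  | mk : ∀ (Δ : List ℕ) (Γ : List (ℕ × MTree)) (i j : ℕ)
      (hi : i < Γ.length) (hj : j < Γ.length)
      (α β : ℕ) (Δ' : List ℕ) (Γ' : List (ℕ × MTree)) (s : MTree),
      i ≠ j → Γ.get ⟨i, hi⟩ = (α, .node Δ' Γ') → Γ.get ⟨j, hj⟩ = (β, s) → β < α →
      JayR (.node Δ Γ)
        (.node Δ ((Γ.set i (α, .node Δ' (Γ' ++ [(β, s)]))).eraseIdx j))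

inductive Ax : Type where
  | four | mono | jay
deriving DecidableEq

def axRule : Ax → MTree → MTree → Prop
  | .four => FourR
  | .mono => MonoR
  | .jay  => JayR

def rootStep (A : Set Ax) (t t' : MTree) : Prop :=
  RhoPlus t t' ∨ RhoMinus t t' ∨ Sigma' t t' ∨ PiPlus t t' ∨ PiMinus t t' ∨
    ∃ a ∈ A, axRule a t t'

def deepStep (R : MTree → MTree → Prop) (t t' : MTree) : Prop :=
  ∃ k s', IsPos k t ∧ R (subtree k t) s' ∧ t' = replace k t s'

def Rw (A : Set Ax) : MTree → MTree → Prop :=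
  Relation.ReflTransGen (deepStep (rootStep A))

end MTree

inductive SPF : Type where
  | top
  | var : ℕ → SPF
  | dia : ℕ → SPF → SPF
  | and : SPF → SPF → SPF

namespace SPF

def md : SPF → ℕ
  | .top => 0
  | .var _ => 0
  | .dia _ φ => φ.md + 1
  | .and φ ψ => max φ.md ψ.md

def bigAnd : List SPF → SPF
  | [] => .top
  | φ :: l => .and φ (bigAnd l)

def toTree : SPF → MTree
  | .top => .node [] []
  | .var p => .node [p] []
  | .dia α φ => .node [] [(α, toTree φ)]
  | .and φ ψ => (toTree φ).sum (toTree ψ)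

end SPF

namespace MTree
mutual
def toForm : MTree → SPF
  | .node Δ Γ => .and (SPF.bigAnd (Δ.map .var)) (toFormL Γ)
def toFormL : List (ℕ × MTree) → SPF
  | [] => .top
  | (α, t) :: Γ => .and (.dia α (toForm t)) (toFormL Γ)
end
end MTree

inductive Deriv (A : Set MTree.Ax) : SPF → SPF → Prop where
  | refl (φ) : Deriv A φ φ
  | top (φ) : Deriv A φ .top
  | trans {φ ψ χ} : Deriv A φ ψ → Deriv A ψ χ → Deriv A φ χ
  | andE1 (φ ψ) : Deriv A (.and φ ψ) φ
  | andE2 (φ ψ) : Deriv A (.and φ ψ) ψ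
  | andI {φ ψ χ} : Deriv A φ ψ → Deriv A φ χ → Deriv A φ (.and ψ χ)
  | dist {φ ψ} (α : ℕ) : Deriv A φ ψ → Deriv A (.dia α φ) (.dia α ψ)
  | four (α : ℕ) (φ) : MTree.Ax.four ∈ A → Deriv A (.dia α (.dia α φ)) (.dia α φ)
  | mono (α β : ℕ) (φ) : MTree.Ax.mono ∈ A → β < α → Deriv A (.dia α φ) (.dia β φ)
  | jay (α β : ℕ) (φ ψ) : MTree.Ax.jay ∈ A → β < α →
      Deriv A (.and (.dia α φ) (.dia β ψ)) (.dia α (.and φ (.dia β ψ)))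

inductive RuleKind : Type where
  | rhoP | rhoM | sigma | piP | piM | four | mono | jay
deriving DecidableEq

def RuleKind.rel : RuleKind → MTree → MTree → Prop
  | .rhoP => MTree.RhoPlus
  | .rhoM => MTree.RhoMinus
  | .sigma => MTree.Sigma'
  | .piP => MTree.PiPlus
  | .piM => MTree.PiMinus
  | .four => MTree.FourR
  | .mono => MTree.MonoR
  | .jay => MTree.JayR

def listRw : List RuleKind → MTree → MTree → Prop
  | [], t, s => t = s
  | μ :: Ω, t, s => ∃ u, MTree.deepStep μ.rel t u ∧ listRw Ω u s


/-! Induction on the derivation. Since `ρ⁺`/`π⁺` copy any label or child to the front and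
`ρ⁻`/`π⁻` delete any, `⟨Δ; Γ⟩` rewrites to `⟨Δ'; Γ'⟩` whenever `Δ' ⊆ Δ` and `Γ' ⊆ Γ`; this gives
`⊤`, both `∧`-eliminations, contraction `t ↪ t + t` and commutativity of `+`. The axioms `4`, `m`,
`J` are single root steps. For `∧`-introduction one needs congruence of `+`: every rule only reads
and changes entries at indices below the lengths of the lists it acts on, so it survives appending
further labels and children on the right, and commutativity transfers this to the left summand. -/

theorem List.modify_append_of_lt_length {α : Type*} (f : α → α) {l : List α} (l' : List α)
    {i : ℕ} (h : i < l.length) : (l ++ l').modify i f = l.modify i f ++ l' := by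
  induction l generalizing i with
  | nil => simp at h
  | cons a l ih =>
    cases i with
    | zero => simp
    | succ i => simp [ih (Nat.lt_of_succ_lt_succ h)]

namespace MTree

variable {A : Set Ax} {t u : MTree}

theorem rootStep.of_axRule {a : Ax} (ha : a ∈ A) (h : axRule a t u) : rootStep A t u :=
  Or.inr (Or.inr (Or.inr (Or.inr (Or.inr ⟨a, ha, h⟩))))

section SumRight

variable (s : MTree)

theorem RhoPlus.sum_right (h : RhoPlus t u) : RhoPlus (t.sum s) (u.sum s) := by
  obtain ⟨Δ, Γ, i, hi⟩ := h
  obtain ⟨Δs, Γs⟩ := s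
  simpa [sum, List.getElem_append_left hi] using
    RhoPlus.mk (Δ ++ Δs) (Γ ++ Γs) i (by simp; omega)

theorem RhoMinus.sum_right (h : RhoMinus t u) : RhoMinus (t.sum s) (u.sum s) := by
  obtain ⟨Δ, Γ, i, hi⟩ := h
  obtain ⟨Δs, Γs⟩ := s
  simpa [sum, List.eraseIdx_append_of_lt_length hi] using
    RhoMinus.mk (Δ ++ Δs) (Γ ++ Γs) i (by simp; omega)

theorem Sigma'.sum_right (h : Sigma' t u) : Sigma' (t.sum s) (u.sum s) := by
  obtain ⟨Δ, Γ, i, j, hi, hj, hij⟩ := h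
  obtain ⟨Δs, Γs⟩ := s
  simpa [sum, List.getElem_append_left hi, List.getElem_append_left hj, hi, hj] using
    Sigma'.mk (Δ ++ Δs) (Γ ++ Γs) i j (by simp; omega) (by simp; omega) hij

theorem PiPlus.sum_right (h : PiPlus t u) : PiPlus (t.sum s) (u.sum s) := by
  obtain ⟨Δ, Γ, i, hi⟩ := h
  obtain ⟨Δs, Γs⟩ := s
  simpa [sum, List.getElem_append_left hi] using
    PiPlus.mk (Δ ++ Δs) (Γ ++ Γs) i (by simp; omega)

theorem PiMinus.sum_right (h : PiMinus t u) : PiMinus (t.sum s) (u.sum s) := by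
  obtain ⟨Δ, Γ, i, hi⟩ := h
  obtain ⟨Δs, Γs⟩ := s
  simpa [sum, List.eraseIdx_append_of_lt_length hi] using
    PiMinus.mk (Δ ++ Δs) (Γ ++ Γs) i (by simp; omega)

theorem FourR.sum_right (h : FourR t u) : FourR (t.sum s) (u.sum s) := by
  obtain ⟨Δ, Γ, i, hi, β, r, hget⟩ := h
  obtain ⟨Δs, Γs⟩ := s
  simpa [sum, hi] using
    FourR.mk (Δ ++ Δs) (Γ ++ Γs) i (by simp; omega) β r
      (by simpa [List.getElem_append_left hi] using hget)

theorem MonoR.sum_right (h : MonoR t u) : MonoR (t.sum s) (u.sum s) := by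
  obtain ⟨Δ, Γ, i, hi, α, β, r, hget, hβ⟩ := h
  obtain ⟨Δs, Γs⟩ := s
  simpa [sum, hi] using
    MonoR.mk (Δ ++ Δs) (Γ ++ Γs) i (by simp; omega) α β r
      (by simpa [List.getElem_append_left hi] using hget) hβ

theorem JayR.sum_right (h : JayR t u) : JayR (t.sum s) (u.sum s) := by
  obtain ⟨Δ, Γ, i, j, hi, hj, α, β, Δ', Γ', r, hij, hgeti, hgetj, hβ⟩ := h
  obtain ⟨Δs, Γs⟩ := s
  simpa [sum, hi, List.eraseIdx_append_of_lt_length (l := Γ.set _ _) (by simpa using hj)] using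
    JayR.mk (Δ ++ Δs) (Γ ++ Γs) i j (by simp; omega) (by simp; omega) α β Δ' Γ' r hij
      (by simpa [List.getElem_append_left hi] using hgeti)
      (by simpa [List.getElem_append_left hj] using hgetj) hβ

theorem rootStep.sum_right (h : rootStep A t u) : rootStep A (t.sum s) (u.sum s) := by
  rcases h with h | h | h | h | h | ⟨a, ha, h⟩
  · exact Or.inl (h.sum_right s)
  · exact Or.inr (Or.inl (h.sum_right s))
  · exact Or.inr (Or.inr (Or.inl (h.sum_right s)))
  · exact Or.inr (Or.inr (Or.inr (Or.inl (h.sum_right s))))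
  · exact Or.inr (Or.inr (Or.inr (Or.inr (Or.inl (h.sum_right s)))))
  · refine .of_axRule ha ?_
    cases a
    · exact FourR.sum_right s h
    · exact MonoR.sum_right s h
    · exact JayR.sum_right s h

end SumRight

theorem deepStep.sum_right {R : MTree → MTree → Prop}
    (hR : ∀ {t u : MTree} (s : MTree), R t u → R (t.sum s) (u.sum s)) (s : MTree)
    (h : deepStep R t u) : deepStep R (t.sum s) (u.sum s) := by
  obtain ⟨k, r, hk, hr, rfl⟩ := h
  cases k with
  | nil => exact ⟨[], _, .nil _, hR s hr, rfl⟩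
  | cons i k =>
    obtain ⟨Δ, Γ⟩ := t
    obtain ⟨Δs, Γs⟩ := s
    obtain _ | ⟨hi, hk⟩ := hk
    refine ⟨i :: k, r, .cons (by simp; omega) (by simpa [List.getElem_append_left hi] using hk),
      ?_, ?_⟩
    · simpa [subtree, sum, List.getElem?_append_left hi, hi] using hr
    · simp [replace, sum, List.modify_append_of_lt_length _ _ hi]

theorem deepStep.dia {R : MTree → MTree → Prop} (Δ : List ℕ) (α : ℕ) (h : deepStep R t u) :
    deepStep R (node Δ [(α, t)]) (node Δ [(α, u)]) := by
  obtain ⟨k, r, hk, hr, rfl⟩ := h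
  exact ⟨0 :: k, r, .cons (by simp) (by simpa using hk), by simpa [subtree] using hr,
    by simp [replace]⟩

namespace Rw

@[refl]
theorem refl (t : MTree) : Rw A t t := Relation.ReflTransGen.refl

theorem trans {v : MTree} (h₁ : Rw A t u) (h₂ : Rw A u v) : Rw A t v :=
  Relation.ReflTransGen.trans h₁ h₂

theorem of_rootStep (h : rootStep A t u) : Rw A t u :=
  .single ⟨[], u, .nil t, h, rfl⟩

theorem sum_right (h : Rw A t u) (s : MTree) : Rw A (t.sum s) (u.sum s) :=
  Relation.ReflTransGen.lift (p := deepStep (rootStep A)) (fun x : MTree => x.sum s)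
    (fun _ _ => deepStep.sum_right (fun s => rootStep.sum_right s) s) t u h

theorem dia (h : Rw A t u) (Δ : List ℕ) (α : ℕ) : Rw A (node Δ [(α, t)]) (node Δ [(α, u)]) :=
  Relation.ReflTransGen.lift (p := deepStep (rootStep A)) (fun x : MTree => node Δ [(α, x)])
    (fun _ _ => deepStep.dia Δ α) t u h

theorem prepend_labels {Δ' Δ : List ℕ} (Γ : List (ℕ × MTree)) (h : Δ' ⊆ Δ) :
    Rw A (node Δ Γ) (node (Δ' ++ Δ) Γ) := by
  induction Δ' with
  | nil => exact refl _
  | cons a Δ' ih =>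
    obtain ⟨i, hi, rfl⟩ := List.getElem_of_mem (List.mem_append_right Δ' (h List.mem_cons_self))
    exact (ih (List.subset_of_cons_subset h)).trans (of_rootStep (Or.inl (RhoPlus.mk _ Γ i hi)))

theorem drop_labels (Δ E : List ℕ) (Γ : List (ℕ × MTree)) :
    Rw A (node (Δ ++ E) Γ) (node Δ Γ) := by
  induction E with
  | nil => simpa using refl _
  | cons e E ih =>
    refine (of_rootStep (Or.inr (Or.inl (RhoMinus.mk _ Γ Δ.length (by simp))))).trans ?_
    simpa [List.eraseIdx_append_of_length_le] using ih

theorem prepend_children {Γ' Γ : List (ℕ × MTree)} (Δ : List ℕ) (h : Γ' ⊆ Γ) :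
    Rw A (node Δ Γ) (node Δ (Γ' ++ Γ)) := by
  induction Γ' with
  | nil => exact refl _
  | cons a Γ' ih =>
    obtain ⟨i, hi, rfl⟩ := List.getElem_of_mem (List.mem_append_right Γ' (h List.mem_cons_self))
    exact (ih (List.subset_of_cons_subset h)).trans
      (of_rootStep (Or.inr (Or.inr (Or.inr (Or.inl (PiPlus.mk Δ _ i hi))))))

theorem drop_children (Δ : List ℕ) (Γ E : List (ℕ × MTree)) :
    Rw A (node Δ (Γ ++ E)) (node Δ Γ) := by
  induction E with
  | nil => simpa using refl _
  | cons e E ih =>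
    refine (of_rootStep
      (Or.inr (Or.inr (Or.inr (Or.inr (Or.inl (PiMinus.mk Δ _ Γ.length (by simp)))))))).trans ?_
    simpa [List.eraseIdx_append_of_length_le] using ih

theorem of_subset {Δ Δ' : List ℕ} {Γ Γ' : List (ℕ × MTree)} (hΔ : Δ' ⊆ Δ) (hΓ : Γ' ⊆ Γ) :
    Rw A (node Δ Γ) (node Δ' Γ') :=
  (((prepend_labels Γ hΔ).trans (drop_labels Δ' Δ Γ)).trans
    (prepend_children Δ' hΓ)).trans (drop_children Δ' Γ' Γ)

theorem to_empty (t : MTree) : Rw A t (node [] []) := by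
  obtain ⟨Δ, Γ⟩ := t
  exact of_subset (List.nil_subset _) (List.nil_subset _)

theorem sum_fst (t s : MTree) : Rw A (t.sum s) t := by
  obtain ⟨Δ, Γ⟩ := t
  obtain ⟨Δs, Γs⟩ := s
  exact of_subset (List.subset_append_left _ _) (List.subset_append_left _ _)

theorem sum_snd (t s : MTree) : Rw A (t.sum s) s := by
  obtain ⟨Δ, Γ⟩ := t
  obtain ⟨Δs, Γs⟩ := s
  exact of_subset (List.subset_append_right _ _) (List.subset_append_right _ _)

theorem self_sum (t : MTree) : Rw A t (t.sum t) := by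
  obtain ⟨Δ, Γ⟩ := t
  exact of_subset (by simp) (by simp)

theorem sum_comm (t s : MTree) : Rw A (t.sum s) (s.sum t) := by
  obtain ⟨Δ, Γ⟩ := t
  obtain ⟨Δs, Γs⟩ := s
  exact of_subset (List.append_subset.2 ⟨List.subset_append_right _ _, List.subset_append_left _ _⟩)
    (List.append_subset.2 ⟨List.subset_append_right _ _, List.subset_append_left _ _⟩)

theorem sum_left (h : Rw A t u) (s : MTree) : Rw A (s.sum t) (s.sum u) :=
  ((sum_comm s t).trans (h.sum_right s)).trans (sum_comm u s)

theorem sum {t' u' : MTree} (h : Rw A t u) (h' : Rw A t' u') : Rw A (t.sum t') (u.sum u') :=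
  (h.sum_right t').trans (h'.sum_left u)

theorem four (hA : Ax.four ∈ A) (α : ℕ) (t : MTree) :
    Rw A (node [] [(α, node [] [(α, t)])]) (node [] [(α, t)]) :=
  of_rootStep (.of_axRule hA (.mk [] _ 0 (by simp) α t rfl))

theorem mono (hA : Ax.mono ∈ A) {α β : ℕ} (hβ : β < α) (t : MTree) :
    Rw A (node [] [(α, t)]) (node [] [(β, t)]) :=
  of_rootStep (.of_axRule hA (.mk [] _ 0 (by simp) α β t rfl hβ))

theorem jay (hA : Ax.jay ∈ A) {α β : ℕ} (hβ : β < α) (t s : MTree) :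
    Rw A ((node [] [(α, t)]).sum (node [] [(β, s)]))
      (node [] [(α, t.sum (node [] [(β, s)]))]) := by
  obtain ⟨Δ, Γ⟩ := t
  simpa [MTree.sum] using of_rootStep (A := A)
    (.of_axRule hA (.mk [] [(α, node Δ Γ), (β, s)] 0 1 (by simp) (by simp) α β Δ Γ s
      (by simp) rfl rfl hβ))

end Rw

end MTree

theorem stmt15 (A : Set MTree.Ax) (φ ψ : SPF) (h : Deriv A φ ψ) :
    MTree.Rw A (SPF.toTree φ) (SPF.toTree ψ) := by
  induction h with
  | refl => exact .refl _
  | top => exact MTree.Rw.to_empty _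
  | trans _ _ ih₁ ih₂ => exact ih₁.trans ih₂
  | andE1 => exact MTree.Rw.sum_fst _ _
  | andE2 => exact MTree.Rw.sum_snd _ _
  | andI _ _ ih₁ ih₂ => exact (MTree.Rw.self_sum _).trans (ih₁.sum ih₂)
  | dist α _ ih => exact ih.dia [] α
  | four α _ hA => exact MTree.Rw.four hA α _
  | mono _ _ _ hA hβ => exact MTree.Rw.mono hA hβ _
  | jay _ _ _ _ hA hβ => exact MTree.Rw.jay hA hβ _ _
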